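/- arXiv:1711.05149 — 10 statements merged into one kernel-verified Lean document; each statement's English description precedes it below -/
import Mathlib

section
/- Let X be a normed space and let x, y be non-zero vectors in the closed unit ball of X. If ‖x − y‖ ≥ 1, then ‖x/‖x‖ − y/‖y‖‖ ≥ ‖x − y‖. -/
theorem stmt_0 {X : Type*} [NormedAddCommGroup X] [NormedSpace ℝ X]
    (x y : X) (hx : x ≠ 0) (hy : y ≠ 0) (hx1 : ‖x‖ ≤ 1) (hy1 : ‖y‖ ≤ 1)
    (h : 1 ≤ ‖x - y‖) :
    ‖x - y‖ ≤ ‖‖x‖⁻¹ • x - ‖y‖⁻¹ • y‖ := by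
  wlog hab : ‖y‖ ≤ ‖x‖ with H
  · rw [norm_sub_rev, norm_sub_rev (‖x‖⁻¹ • x)]
    exact H y x hy hx hy1 hx1 (by rwa [norm_sub_rev]) (le_of_not_ge hab)
  have ha : (0:ℝ) < ‖x‖ := norm_pos_iff.2 hx
  have hb : (0:ℝ) < ‖y‖ := norm_pos_iff.2 hy
  have key : ‖x‖⁻¹ • x - ‖y‖⁻¹ • y = ‖y‖⁻¹ • (x - y) + (‖x‖⁻¹ - ‖y‖⁻¹) • x := by
    rw [smul_sub, sub_smul]; abel
  have h3 : ‖‖y‖⁻¹ • (x-y)‖ ≤ ‖‖y‖⁻¹ • (x-y) + (‖x‖⁻¹ - ‖y‖⁻¹) • x‖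
      + ‖(‖x‖⁻¹ - ‖y‖⁻¹) • x‖ := by
    have := norm_add_le (‖y‖⁻¹ • (x-y) + (‖x‖⁻¹ - ‖y‖⁻¹) • x) (-((‖x‖⁻¹ - ‖y‖⁻¹) • x))
    simpa using this
  rw [key]
  have hinv : ‖x‖⁻¹ ≤ ‖y‖⁻¹ := by
    apply inv_anti₀ hb hab
  rw [norm_smul, norm_smul, Real.norm_eq_abs, Real.norm_eq_abs,
    abs_of_pos (inv_pos.2 hb), abs_of_nonpos (by linarith)] at h3
  have h4 : ‖y‖⁻¹ * ‖y‖ = 1 := inv_mul_cancel₀ hb.ne'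
  have h5 : ‖x‖⁻¹ * ‖x‖ = 1 := inv_mul_cancel₀ ha.ne'
  nlinarith [norm_nonneg (‖y‖⁻¹ • (x-y) + (‖x‖⁻¹ - ‖y‖⁻¹) • x), mul_pos hb (inv_pos.2 hb)]
end

section
/- Let X be a normed space and let x, y be non-zero vectors in the closed unit ball of X. If ‖x/‖x‖ − y/‖y‖‖ ≤ 1, then ‖x − y‖ ≤ 1. -/
theorem stmt_1 {X : Type*} [NormedAddCommGroup X] [NormedSpace ℝ X]
    (x y : X) (hx : x ≠ 0) (hy : y ≠ 0) (hx1 : ‖x‖ ≤ 1) (hy1 : ‖y‖ ≤ 1)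
    (h : ‖‖x‖⁻¹ • x - ‖y‖⁻¹ • y‖ ≤ 1) :
    ‖x - y‖ ≤ 1 := by
  wlog hle : ‖y‖ ≤ ‖x‖ generalizing x y
  · rw [← norm_neg, neg_sub]
    exact this y x hy hx hy1 hx1 (by rwa [← norm_neg, neg_sub]) (le_of_not_ge hle)
  have hxn : (0:ℝ) < ‖x‖ := norm_pos_iff.mpr hx
  have hyn : (0:ℝ) < ‖y‖ := norm_pos_iff.mpr hy
  have hun : ‖‖x‖⁻¹ • x‖ = 1 := by
    rw [norm_smul, Real.norm_eq_abs, abs_inv, abs_of_pos hxn, inv_mul_cancel₀ hxn.ne']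
  have key : x - y = ‖y‖ • (‖x‖⁻¹ • x - ‖y‖⁻¹ • y) + (‖x‖ - ‖y‖) • (‖x‖⁻¹ • x) := by
    rw [smul_sub, smul_smul, smul_smul, smul_smul, mul_inv_cancel₀ hyn.ne', one_smul]
    rw [sub_mul, mul_inv_cancel₀ hxn.ne', sub_smul, one_smul]
    abel
  calc ‖x - y‖ ≤ ‖‖y‖ • (‖x‖⁻¹ • x - ‖y‖⁻¹ • y)‖ + ‖(‖x‖ - ‖y‖) • (‖x‖⁻¹ • x)‖ := by
        rw [key]; exact norm_add_le _ _
    _ ≤ ‖y‖ * 1 + (‖x‖ - ‖y‖) * 1 := by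
        rw [norm_smul, norm_smul, hun, Real.norm_eq_abs, Real.norm_eq_abs,
          abs_of_pos hyn, abs_of_nonneg (sub_nonneg.mpr hle)]
        gcongr
    _ = ‖x‖ := by ring
    _ ≤ 1 := hx1
end

section
/- Let X and Y be normed spaces, ε > 0, and let A ⊆ S_X be a set of unit vectors such that ‖x − y‖ ≥ 1 + ε for all distinct x, y ∈ A. Let T : X → Y be a linear map such that ‖x‖ ≤ ‖Tx‖ ≤ (1 + δ)‖x‖ for all x ∈ X, where 0 < δ ≤ ε/(2 + ε). Then the set {Tx/‖Tx‖ : x ∈ A} of unit vectors in Y is (1 + ε/2)-separated: any two distinct elements are at distance at least 1 + ε/2. -/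
/-- Key normalization inequality: if `1 ≤ ‖u‖ ≤ ‖v‖ ≤ 1+δ` and `1+ε ≤ ‖u-v‖`,
with `δ ≤ ε/(2+ε)`, then the normalizations are `(1+ε/2)`-separated. -/
theorem stmt_3_aux {Y : Type*} [NormedAddCommGroup Y] [NormedSpace ℝ Y]
    (ε δ : ℝ) (hε : 0 < ε) (hδ : 0 < δ) (hδε : δ ≤ ε / (2 + ε))
    (u v : Y) (hu1 : 1 ≤ ‖u‖) (huv : ‖u‖ ≤ ‖v‖) (hv : ‖v‖ ≤ 1 + δ)
    (hd : 1 + ε ≤ ‖u - v‖) :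
    1 + ε / 2 ≤ ‖‖u‖⁻¹ • u - ‖v‖⁻¹ • v‖ := by
  set a := ‖u‖ with ha
  set b := ‖v‖ with hb
  have ha0 : (0:ℝ) < a := lt_of_lt_of_le one_pos hu1
  have hb0 : (0:ℝ) < b := lt_of_lt_of_le ha0 huv
  have hst : b⁻¹ ≤ a⁻¹ := by
    exact inv_anti₀ ha0 huv
  have h1 : a⁻¹ • u - b⁻¹ • v = a⁻¹ • (u - v) + (a⁻¹ - b⁻¹) • v := by
    rw [smul_sub, sub_smul]; abel
  have h2 : ‖a⁻¹ • (u - v)‖ - ‖(a⁻¹ - b⁻¹) • v‖ ≤ ‖a⁻¹ • (u - v) + (a⁻¹ - b⁻¹) • v‖ := by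
    have h := norm_sub_norm_le (a⁻¹ • (u - v)) (-((a⁻¹ - b⁻¹) • v))
    simpa [sub_neg_eq_add] using h
  have h3 : ‖a⁻¹ • (u - v)‖ = a⁻¹ * ‖u - v‖ := by
    rw [norm_smul, Real.norm_eq_abs, abs_of_pos (inv_pos.mpr ha0)]
  have h4 : ‖(a⁻¹ - b⁻¹) • v‖ = (a⁻¹ - b⁻¹) * b := by
    rw [norm_smul, Real.norm_eq_abs, abs_of_nonneg (by linarith)]
  rw [h1]
  refine le_trans ?_ h2
  rw [h3, h4]
  -- now pure arithmetic
  have hsa : a⁻¹ * a = 1 := inv_mul_cancel₀ (ne_of_gt ha0)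
  have htb : b⁻¹ * b = 1 := inv_mul_cancel₀ (ne_of_gt hb0)
  have hδε' : δ * (2 + ε) ≤ ε := by
    rw [le_div_iff₀ (show (0:ℝ) < 2 + ε by linarith)] at hδε
    linarith
  have key : ε / 2 ≤ a⁻¹ * (‖u - v‖ - b) := by
    have hdb : ε - δ ≤ ‖u - v‖ - b := by linarith
    have hs : (1 + δ)⁻¹ ≤ a⁻¹ := inv_anti₀ ha0 (le_trans huv hv)
    have h5 : (1 + δ)⁻¹ * (ε - δ) ≤ a⁻¹ * (‖u - v‖ - b) := by
      apply mul_le_mul hs hdb (by nlinarith) (le_of_lt (inv_pos.mpr ha0))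
    refine le_trans ?_ h5
    rw [inv_mul_eq_div, le_div_iff₀ (by linarith : (0:ℝ) < 1 + δ)]
    nlinarith
  nlinarith [key, htb, inv_pos.mpr ha0]

theorem stmt_3 {X Y : Type*} [NormedAddCommGroup X] [NormedSpace ℝ X]
    [NormedAddCommGroup Y] [NormedSpace ℝ Y]
    (ε δ : ℝ) (hε : 0 < ε) (hδ : 0 < δ) (hδε : δ ≤ ε / (2 + ε))
    (A : Set X) (hA : ∀ x ∈ A, ‖x‖ = 1)
    (hsep : ∀ x ∈ A, ∀ y ∈ A, x ≠ y → 1 + ε ≤ ‖x - y‖)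
    (T : X →ₗ[ℝ] Y)
    (hT : ∀ x : X, ‖x‖ ≤ ‖T x‖ ∧ ‖T x‖ ≤ (1 + δ) * ‖x‖) :
    ∀ x ∈ A, ∀ y ∈ A, x ≠ y →
      1 + ε / 2 ≤ ‖‖T x‖⁻¹ • T x - ‖T y‖⁻¹ • T y‖ := by
  intro x hx y hy hxy
  have hx1 : ‖x‖ = 1 := hA x hx
  have hy1 : ‖y‖ = 1 := hA y hy
  have hTx := hT x
  have hTy := hT y
  have hTx1 : 1 ≤ ‖T x‖ := by rw [← hx1]; exact hTx.1
  have hTy1 : 1 ≤ ‖T y‖ := by rw [← hy1]; exact hTy.1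
  have hTx2 : ‖T x‖ ≤ 1 + δ := by have := hTx.2; rw [hx1] at this; linarith
  have hTy2 : ‖T y‖ ≤ 1 + δ := by have := hTy.2; rw [hy1] at this; linarith
  have hd : 1 + ε ≤ ‖T x - T y‖ := by
    have h := (hT (x - y)).1
    rw [map_sub] at h
    exact le_trans (hsep x hx y hy hxy) h
  rcases le_total ‖T x‖ ‖T y‖ with h | h
  · exact stmt_3_aux ε δ hε hδ hδε (T x) (T y) hTx1 h hTy2 hd
  · rw [norm_sub_rev]
    exact stmt_3_aux ε δ hε hδ hδε (T y) (T x) hTy1 h hTx2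
      (by rwa [norm_sub_rev])
end

section
/- Let X and Y be normed spaces, ε > 0, and let A ⊆ S_X be symmetrically (1+ε)-separated, i.e., ‖x + y‖ ≥ 1 + ε and ‖x − y‖ ≥ 1 + ε for all distinct x, y ∈ A. Let T : X → Y be linear with ‖x‖ ≤ ‖Tx‖ ≤ (1 + δ)‖x‖ for all x, where 0 < δ ≤ ε/(2 + ε). Then {Tx/‖Tx‖ : x ∈ A} is symmetrically (1 + ε/2)-separated in the unit sphere of Y. -/
/-!
Write `a = ‖T x‖ ≤ b = ‖T y‖` for unit vectors `x, y`. Then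
`‖T x / a - T y / b‖ = a⁻¹ ‖T (x - (a / b) y)‖ ≥ a⁻¹ (‖x - y‖ - (1 - a / b))`, which is at least
`‖x - y‖ / (1 + δ)` because `1 ≤ a ≤ b ≤ 1 + δ`. The sum case is the difference case for `-y`,
and `δ ≤ ε / (2 + ε)` is exactly what makes `(1 + ε) / (1 + δ) ≥ 1 + ε / 2`.
-/

theorem norm_sub_le_norm_sub_smul_add {E : Type*} [SeminormedAddCommGroup E] [NormedSpace ℝ E]
    (x y : E) (t : ℝ) : ‖x - y‖ ≤ ‖x - t • y‖ + |1 - t| * ‖y‖ := by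
  have h : x - y = (x - t • y) - (1 - t) • y := by rw [sub_smul, one_smul]; abel
  rw [h, ← Real.norm_eq_abs, ← norm_smul]
  exact norm_sub_le _ _

theorem one_add_half_le_div_one_add {ε δ : ℝ} (hε : 0 ≤ ε) (hδ : 0 ≤ δ)
    (hδε : δ ≤ ε / (2 + ε)) : 1 + ε / 2 ≤ (1 + ε) / (1 + δ) := by
  have hδε' : δ * (2 + ε) ≤ ε := (le_div_iff₀ (by linarith)).mp hδε
  rw [le_div_iff₀ (by linarith)]
  nlinarith

section NormalizedImage

variable {X Y : Type*} [NormedAddCommGroup X] [NormedSpace ℝ X]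
  [NormedAddCommGroup Y] [NormedSpace ℝ Y] {T : X →ₗ[ℝ] Y}

theorem div_le_norm_normalized_sub_of_le (hT : ∀ x, ‖x‖ ≤ ‖T x‖) {x y : X}
    (hx : ‖x‖ = 1) (hy : ‖y‖ = 1) (hxy : 1 ≤ ‖x - y‖) {M : ℝ} (hTy : ‖T y‖ ≤ M)
    (hle : ‖T x‖ ≤ ‖T y‖) : ‖x - y‖ / M ≤ ‖‖T x‖⁻¹ • T x - ‖T y‖⁻¹ • T y‖ := by
  set a := ‖T x‖
  set b := ‖T y‖
  have ha : 1 ≤ a := hx ▸ hT x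
  have hb : 1 ≤ b := hy ▸ hT y
  have hab : a / b ≤ 1 := (div_le_one (by linarith)).mpr hle
  have hrepr : a⁻¹ • T x - b⁻¹ • T y = a⁻¹ • T (x - (a / b) • y) := by
    rw [map_sub, map_smul, smul_sub, smul_smul]
    congr 2
    field_simp
  have hlower : ‖x - y‖ - (1 - a / b) ≤ ‖T (x - (a / b) • y)‖ := by
    have := norm_sub_le_norm_sub_smul_add x y (a / b)
    rw [abs_of_nonneg (by linarith), hy, mul_one] at this
    linarith [hT (x - (a / b) • y)]
  calc ‖x - y‖ / M = (‖x - y‖ - 1) / M + 1 / M := by ring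
    _ ≤ (‖x - y‖ - 1) / a + 1 / b := by
        gcongr; linarith
    _ = a⁻¹ * (‖x - y‖ - (1 - a / b)) := by field_simp; ring
    _ ≤ a⁻¹ * ‖T (x - (a / b) • y)‖ := by gcongr
    _ = ‖a⁻¹ • T x - b⁻¹ • T y‖ := by
        rw [hrepr, norm_smul, norm_inv, norm_norm]

theorem div_le_norm_normalized_sub (hT : ∀ x, ‖x‖ ≤ ‖T x‖) {x y : X}
    (hx : ‖x‖ = 1) (hy : ‖y‖ = 1) (hxy : 1 ≤ ‖x - y‖) {M : ℝ} (hTx : ‖T x‖ ≤ M)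
    (hTy : ‖T y‖ ≤ M) : ‖x - y‖ / M ≤ ‖‖T x‖⁻¹ • T x - ‖T y‖⁻¹ • T y‖ := by
  rcases le_total ‖T x‖ ‖T y‖ with hle | hle
  · exact div_le_norm_normalized_sub_of_le hT hx hy hxy hTy hle
  · rw [norm_sub_rev x, norm_sub_rev (‖T x‖⁻¹ • T x)]
    exact div_le_norm_normalized_sub_of_le hT hy hx (by rwa [norm_sub_rev]) hTx hle

theorem div_le_norm_normalized_add (hT : ∀ x, ‖x‖ ≤ ‖T x‖) {x y : X}
    (hx : ‖x‖ = 1) (hy : ‖y‖ = 1) (hxy : 1 ≤ ‖x + y‖) {M : ℝ} (hTx : ‖T x‖ ≤ M)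
    (hTy : ‖T y‖ ≤ M) : ‖x + y‖ / M ≤ ‖‖T x‖⁻¹ • T x + ‖T y‖⁻¹ • T y‖ := by
  have := div_le_norm_normalized_sub hT (y := -y) hx (by rwa [norm_neg])
    (by rwa [sub_neg_eq_add]) hTx (by rwa [map_neg, norm_neg])
  rwa [sub_neg_eq_add, map_neg, norm_neg, smul_neg, sub_neg_eq_add] at this

end NormalizedImage

theorem stmt_4 {X Y : Type*} [NormedAddCommGroup X] [NormedSpace ℝ X]
    [NormedAddCommGroup Y] [NormedSpace ℝ Y]
    (ε δ : ℝ) (hε : 0 < ε) (hδ : 0 < δ) (hδε : δ ≤ ε / (2 + ε))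
    (A : Set X) (hA : ∀ x ∈ A, ‖x‖ = 1)
    (hsep : ∀ x ∈ A, ∀ y ∈ A, x ≠ y →
      1 + ε ≤ ‖x - y‖ ∧ 1 + ε ≤ ‖x + y‖)
    (T : X →ₗ[ℝ] Y)
    (hT : ∀ x : X, ‖x‖ ≤ ‖T x‖ ∧ ‖T x‖ ≤ (1 + δ) * ‖x‖) :
    ∀ x ∈ A, ∀ y ∈ A, x ≠ y →
      1 + ε / 2 ≤ ‖‖T x‖⁻¹ • T x - ‖T y‖⁻¹ • T y‖ ∧
      1 + ε / 2 ≤ ‖‖T x‖⁻¹ • T x + ‖T y‖⁻¹ • T y‖ := by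
  intro x hxA y hyA hxy
  have hTlower : ∀ z, ‖z‖ ≤ ‖T z‖ := fun z ↦ (hT z).1
  have hTupper : ∀ z ∈ A, ‖T z‖ ≤ 1 + δ := fun z hz ↦ by simpa [hA z hz] using (hT z).2
  have hgap := one_add_half_le_div_one_add hε.le hδ.le hδε
  obtain ⟨hsub, hadd⟩ := hsep x hxA y hyA hxy
  have hsub_div : (1 + ε) / (1 + δ) ≤ ‖x - y‖ / (1 + δ) := by gcongr
  have hadd_div : (1 + ε) / (1 + δ) ≤ ‖x + y‖ / (1 + δ) := by gcongr
  refine ⟨?_, ?_⟩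
  · refine hgap.trans (hsub_div.trans ?_)
    exact div_le_norm_normalized_sub hTlower (hA x hxA) (hA y hyA) (by linarith)
      (hTupper x hxA) (hTupper y hyA)
  · refine hgap.trans (hadd_div.trans ?_)
    exact div_le_norm_normalized_add hTlower (hA x hxA) (hA y hyA) (by linarith)
      (hTupper x hxA) (hTupper y hyA)
end

section
/- Let X be a Banach space and suppose there exist x ∈ X with ‖x‖ = 3/4, a norm-one functional ψ with ψ(x) = ‖x‖, unit vectors (yₙ) and norm-one functionals (φₙ) with φₙ(yₙ) = 1, such that ψ(yₙ) = 0 for all n and φ_k(y_i) = 0 for all i > k. Set δₙ = 2^{−(n+2)}, x₁ = x + y₁ and x_{n+1} = x − δ₁y₁ − ⋯ − δₙyₙ + y_{n+1}. Then for all k < n: ‖x_k + xₙ‖ ≥ 3/2 > 1 and ‖x_k − xₙ‖ ≥ 1 + δ_k > 1. -/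
/-!
Every `x n` is `z - ∑_{1 ≤ j < n} δ j • y j + y n`. Since `ψ` kills all `y j`, `ψ (x k + x n) = 2 ψ z = 3/2`;
since `φ k` kills `y i` for `i > k`, in `x k - x n` it only sees `y k` (coefficient `1`) and
`δ k • y k`, so `φ k (x k - x n) = 1 + δ k`. Norm-one functionals bound norms from below.
-/

open Finset

section KottmanSequence

variable {X : Type*} [NormedAddCommGroup X] [NormedSpace ℝ X]

theorem apply_le_norm_of_opNorm_eq_one {f : X →L[ℝ] ℝ} (hf : ‖f‖ = 1) (v : X) : f v ≤ ‖v‖ :=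
  calc f v ≤ ‖f v‖ := le_abs_self _
    _ ≤ ‖f‖ * ‖v‖ := f.le_opNorm v
    _ = ‖v‖ := by rw [hf, one_mul]

variable {z : X} {y : ℕ → X} {δ : ℕ → ℝ}

theorem eq_sub_sum_Ico_add_of_recursion {x : ℕ → X} (hx1 : x 1 = z + y 1)
    (hxn : ∀ n : ℕ, 1 ≤ n → x (n + 1) = z - ∑ j ∈ Icc 1 n, δ j • y j + y (n + 1))
    {n : ℕ} (hn : 1 ≤ n) : x n = z - ∑ j ∈ Ico 1 n, δ j • y j + y n := by
  obtain ⟨m, rfl⟩ : ∃ m, n = m + 1 := ⟨n - 1, by omega⟩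
  rcases Nat.eq_zero_or_pos m with rfl | hm
  · simpa using hx1
  · rw [hxn m hm, ← Finset.Ico_add_one_right_eq_Icc]

theorem map_sub_sum_Ico_add_of_map_eq_zero {ψ : X →L[ℝ] ℝ} (hψy : ∀ n, ψ (y n) = 0) (n : ℕ) :
    ψ (z - ∑ j ∈ Ico 1 n, δ j • y j + y n) = ψ z := by
  simp [map_sum, hψy]

theorem map_sum_Ico_smul_of_triangular {f : X →L[ℝ] ℝ} {k n : ℕ} (hfk : f (y k) = 1)
    (hf : ∀ i, k < i → f (y i) = 0) (hkn : k < n) (c : ℕ → ℝ) :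
    f (∑ j ∈ Ico k n, c j • y j) = c k := by
  rw [map_sum, sum_eq_single_of_mem k (mem_Ico.mpr ⟨le_rfl, hkn⟩)]
  · simp [hfk]
  · intro j hj hjk
    simp [hf j (lt_of_le_of_ne (mem_Ico.mp hj).1 (Ne.symm hjk))]

theorem map_sub_of_triangular {f : X →L[ℝ] ℝ} {k n : ℕ} (hfk : f (y k) = 1)
    (hf : ∀ i, k < i → f (y i) = 0) (hk : 1 ≤ k) (hkn : k < n) :
    f ((z - ∑ j ∈ Ico 1 k, δ j • y j + y k) - (z - ∑ j ∈ Ico 1 n, δ j • y j + y n))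
      = 1 + δ k := by
  have hsplit : ∑ j ∈ Ico 1 n, δ j • y j
      = ∑ j ∈ Ico 1 k, δ j • y j + ∑ j ∈ Ico k n, δ j • y j :=
    (sum_Ico_consecutive _ hk hkn.le).symm
  have hdiff : (z - ∑ j ∈ Ico 1 k, δ j • y j + y k) - (z - ∑ j ∈ Ico 1 n, δ j • y j + y n)
      = ∑ j ∈ Ico k n, δ j • y j + y k - y n := by
    rw [hsplit]; abel
  rw [hdiff, map_sub, map_add, map_sum_Ico_smul_of_triangular hfk hf hkn, hfk, hf n hkn]
  ring

end KottmanSequence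

theorem stmt_8_general {X : Type*} [NormedAddCommGroup X] [NormedSpace ℝ X]
    (z : X) (ψ : X →L[ℝ] ℝ) (y : ℕ → X) (φ : ℕ → X →L[ℝ] ℝ)
    (hz : ‖z‖ = 3 / 4) (hψ : ‖ψ‖ = 1) (hψz : ψ z = ‖z‖)
    (hφ : ∀ n, ‖φ n‖ = 1)
    (hφy : ∀ n, φ n (y n) = 1)
    (hψy : ∀ n, ψ (y n) = 0)
    (hker : ∀ i k : ℕ, k < i → φ k (y i) = 0)
    (δ : ℕ → ℝ)
    (x : ℕ → X)
    (hx1 : x 1 = z + y 1)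
    (hxn : ∀ n : ℕ, 1 ≤ n →
      x (n + 1) = z - ∑ j ∈ Finset.Icc 1 n, δ j • y j + y (n + 1)) :
    ∀ k n : ℕ, 1 ≤ k → k < n →
      (3 / 2 : ℝ) ≤ ‖x k + x n‖ ∧ 1 + δ k ≤ ‖x k - x n‖ := by
  intro k n hk hkn
  rw [eq_sub_sum_Ico_add_of_recursion hx1 hxn hk,
    eq_sub_sum_Ico_add_of_recursion hx1 hxn (hk.trans hkn.le)]
  constructor
  · calc (3 / 2 : ℝ) = ψ ((z - ∑ j ∈ Ico 1 k, δ j • y j + y k)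
          + (z - ∑ j ∈ Ico 1 n, δ j • y j + y n)) := by
          rw [map_add, map_sub_sum_Ico_add_of_map_eq_zero hψy,
            map_sub_sum_Ico_add_of_map_eq_zero hψy, hψz, hz]
          norm_num
      _ ≤ _ := apply_le_norm_of_opNorm_eq_one hψ _
  · calc 1 + δ k = φ k ((z - ∑ j ∈ Ico 1 k, δ j • y j + y k)
          - (z - ∑ j ∈ Ico 1 n, δ j • y j + y n)) :=
          (map_sub_of_triangular (hφy k) (fun i hi => hker i k hi) hk hkn).symm
      _ ≤ _ := apply_le_norm_of_opNorm_eq_one (hφ k) _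

theorem stmt_8 {X : Type*} [NormedAddCommGroup X] [NormedSpace ℝ X]
    [CompleteSpace X]
    (z : X) (ψ : X →L[ℝ] ℝ) (y : ℕ → X) (φ : ℕ → X →L[ℝ] ℝ)
    (hz : ‖z‖ = 3 / 4) (hψ : ‖ψ‖ = 1) (hψz : ψ z = ‖z‖)
    (hy : ∀ n, ‖y n‖ = 1) (hφ : ∀ n, ‖φ n‖ = 1)
    (hφy : ∀ n, φ n (y n) = 1)
    (hψy : ∀ n, ψ (y n) = 0)
    (hker : ∀ i k : ℕ, k < i → φ k (y i) = 0)
    (δ : ℕ → ℝ) (hδ : ∀ n, δ n = (2 : ℝ) ^ (-(n : ℤ) - 2))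
    (x : ℕ → X)
    (hx1 : x 1 = z + y 1)
    (hxn : ∀ n : ℕ, 1 ≤ n →
      x (n + 1) = z - ∑ j ∈ Finset.Icc 1 n, δ j • y j + y (n + 1)) :
    ∀ k n : ℕ, 1 ≤ k → k < n →
      (3 / 2 : ℝ) ≤ ‖x k + x n‖ ∧ 1 + δ k ≤ ‖x k - x n‖ :=
  stmt_8_general z ψ y φ hz hψ hψz hφ hφy hψy hker δ x hx1 hxn
end

section
/- Let E be a finite-dimensional subspace of a Banach space X and ε > 0. Then there exists a closed finite-codimensional subspace F of X such that ‖x‖ ≤ (1 + ε)‖x + v‖ for every x ∈ E and v ∈ F. -/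
/-!
Cover the compact unit sphere of `E` by finitely many open sets `{z | c < g_y z}`, where `g_y` is a
Hahn–Banach functional of norm at most one with `g_y y = ‖y‖`. By homogeneity every nonzero
`x ∈ E` has one of these `g` with `c ‖x‖ < g x`, and for `v` in their common kernel `F`,
`g x = g (x + v) ≤ ‖x + v‖`. Take `c = (1 + ε)⁻¹`; `F` is the kernel of a continuous map into `ℝⁿ`.
-/

open Metric

theorem StrongDual.apply_le_norm_add_of_apply_eq_zero {X : Type*} [NormedAddCommGroup X]
    [NormedSpace ℝ X] {g : StrongDual ℝ X} (hg : ‖g‖ ≤ 1) (x : X) {v : X} (hv : g v = 0) :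
    g x ≤ ‖x + v‖ :=
  calc g x = g (x + v) := by rw [map_add, hv, add_zero]
    _ ≤ ‖g (x + v)‖ := le_abs_self _
    _ ≤ ‖x + v‖ := by simpa using g.le_of_opNorm_le hg (x + v)

theorem exists_finset_strongDual_norming {X : Type*} [NormedAddCommGroup X] [NormedSpace ℝ X]
    (E : Subspace ℝ X) [FiniteDimensional ℝ E] {c : ℝ} (hc : c < 1) :
    ∃ t : Finset (StrongDual ℝ X),
      (∀ g ∈ t, ‖g‖ ≤ 1) ∧ ∀ x ∈ E, x ≠ 0 → ∃ g ∈ t, c * ‖x‖ < g x := by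
  classical
  choose φ hφ_norm hφ_apply using fun y : X ↦ exists_dual_vector'' ℝ y
  set S : Set X := (↑) '' sphere (0 : E) 1
  have hS_compact : IsCompact S := (isCompact_sphere _ _).image continuous_subtype_val
  have hS_cover : S ⊆ ⋃ y ∈ S, {z | c < φ y z} := by
    rintro _ ⟨y, hy, rfl⟩
    refine Set.mem_biUnion ⟨y, hy, rfl⟩ ?_
    show c < φ y y
    rw [hφ_apply]
    exact hc.trans_eq (mem_sphere_zero_iff_norm.mp hy).symm
  obtain ⟨s, hsS, hs_fin, hs_cover⟩ := hS_compact.elim_finite_subcover_image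
    (fun y _ ↦ isOpen_lt continuous_const (φ y).continuous) hS_cover
  refine ⟨hs_fin.toFinset.image φ, by simp [hφ_norm], fun x hx hx0 ↦ ?_⟩
  have hx_pos : 0 < ‖x‖ := norm_pos_iff.mpr hx0
  have hu : ‖x‖⁻¹ • x ∈ S :=
    ⟨⟨_, E.smul_mem _ hx⟩, by simp [norm_smul, hx_pos.ne'], rfl⟩
  obtain ⟨y, hys, hy⟩ := Set.mem_iUnion₂.mp (hs_cover hu)
  refine ⟨φ y, Finset.mem_image_of_mem _ (hs_fin.mem_toFinset.mpr hys), ?_⟩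
  rw [Set.mem_ofPred_eq, map_smul, smul_eq_mul, lt_inv_mul_iff₀ hx_pos] at hy
  linarith

theorem stmt_11_general {X : Type*} [NormedAddCommGroup X] [NormedSpace ℝ X]
    (E : Subspace ℝ X) (hE : FiniteDimensional ℝ E) (ε : ℝ) (hε : 0 < ε) :
    ∃ F : Subspace ℝ X, IsClosed (F : Set X) ∧ FiniteDimensional ℝ (X ⧸ F) ∧
      ∀ x ∈ E, ∀ v ∈ F, ‖x‖ ≤ (1 + ε) * ‖x + v‖ := by
  have := hE
  obtain ⟨t, ht_norm, ht_norming⟩ :=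
    exists_finset_strongDual_norming E (inv_lt_one_of_one_lt₀ (by linarith : 1 < 1 + ε))
  let T : X →L[ℝ] (t → ℝ) := ContinuousLinearMap.pi fun g ↦ g.1
  refine ⟨(T : X →ₗ[ℝ] (t → ℝ)).ker, T.isClosed_ker, Submodule.CoFG.ker _, fun x hx v hv ↦ ?_⟩
  rcases eq_or_ne x 0 with rfl | hx0
  · simp only [norm_zero, zero_add]
    positivity
  obtain ⟨g, hgt, hgx⟩ := ht_norming x hx hx0
  have hgv : g v = 0 := congrFun (LinearMap.mem_ker.mp hv) ⟨g, hgt⟩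
  have := hgx.trans_le (StrongDual.apply_le_norm_add_of_apply_eq_zero (ht_norm g hgt) x hgv)
  rw [inv_mul_lt_iff₀ (by linarith)] at this
  exact this.le

theorem stmt_11 {X : Type*} [NormedAddCommGroup X] [NormedSpace ℝ X]
    [CompleteSpace X]
    (E : Subspace ℝ X) (hE : FiniteDimensional ℝ E) (ε : ℝ) (hε : 0 < ε) :
    ∃ F : Subspace ℝ X, IsClosed (F : Set X) ∧ FiniteDimensional ℝ (X ⧸ F) ∧
      ∀ x ∈ E, ∀ v ∈ F, ‖x‖ ≤ (1 + ε) * ‖x + v‖ :=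
  stmt_11_general E hE ε hε
end

section
/- Let (eⱼ) be a basic sequence in an infinite-dimensional Banach space X and let (εⱼ) be a sequence of positive reals converging to 0. Then there exists a normalized block basic sequence (xⱼ) of (eⱼ) whose canonical basis projections Pⱼ on the closed span of (xⱼ) satisfy ‖Pⱼ‖ ≤ 1 + εⱼ for all j. -/
/-- A sequence is a basic sequence: all terms are nonzero and it satisfies
Grunblum's criterion (uniformly bounded basis projections on its span). -/
def IsBasicSeq {X : Type*} [NormedAddCommGroup X] [NormedSpace ℝ X]
    (e : ℕ → X) : Prop :=
  (∀ j, e j ≠ 0) ∧ ∃ K : ℝ, ∀ (a : ℕ → ℝ) (m n : ℕ), m ≤ n →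
    ‖∑ j ∈ Finset.range m, a j • e j‖ ≤ K * ‖∑ j ∈ Finset.range n, a j • e j‖

/-!
Mazur's technique. If `F` is a finite-dimensional subspace and `δ > 0`, finitely many norm-one
functionals, taken at a `δ/(1+δ)`-net of the unit sphere of `F`, witness
`‖f‖ ≤ (1 + δ) ‖f + y‖` for every `f ∈ F` and every `y` in their common kernel. That kernel has
finite codimension, so it contains a normalized block of `(eⱼ)` beyond any given index. Choosing the
blocks one after another, with `F` the span of the blocks chosen so far and `δ = δₙ`, gives
`‖Pₙ‖ ≤ (1 + δₙ) ‖Pₙ₊₁‖` on partial sums, hence `‖Pⱼ‖ ≤ ∏_{i ≥ j} (1 + δᵢ) ≤ 1 + εⱼ` once the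
`δᵢ` have small enough tails.
-/

open Finset Submodule

theorem IsBasicSeq.linearIndepOn_range {X : Type*} [NormedAddCommGroup X] [NormedSpace ℝ X]
    {e : ℕ → X} (he : IsBasicSeq e) (n : ℕ) : LinearIndepOn ℝ e (range n : Set ℕ) := by
  obtain ⟨hne, K, hK⟩ := he
  refine linearIndepOn_finset_iff.2 fun a ha i hi => ?_
  have hpartial : ∀ k ≤ n, ∑ i ∈ range k, a i • e i = 0 := fun k hk => by
    simpa [ha] using hK a k n hk
  have hi' := hpartial (i + 1) (mem_range.1 hi)
  rw [sum_range_succ, hpartial i (mem_range.1 hi).le, zero_add, smul_eq_zero] at hi'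
  exact hi'.resolve_right (hne i)

theorem IsBasicSeq.linearIndependent {X : Type*} [NormedAddCommGroup X] [NormedSpace ℝ X]
    {e : ℕ → X} (he : IsBasicSeq e) : LinearIndependent ℝ e :=
  linearIndependent_iff'.2 fun s g hg i hi => by
    obtain ⟨n, hn⟩ := s.exists_nat_subset_range
    exact linearIndepOn_finset_iff.1 ((he.linearIndepOn_range n).mono hn) g hg i hi

theorem LinearMap.exists_block_ne_zero_mem_ker {𝕜 X V : Type*} [Field 𝕜] [AddCommGroup X]
    [Module 𝕜 X] [AddCommGroup V] [Module 𝕜 V] [FiniteDimensional 𝕜 V] {e : ℕ → X}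
    (he : LinearIndependent 𝕜 e) (T : X →ₗ[𝕜] V) (m : ℕ) :
    ∃ m', m < m' ∧ ∃ a : ℕ → 𝕜,
      ∑ i ∈ Ico m m', a i • e i ≠ 0 ∧ T (∑ i ∈ Ico m m', a i • e i) = 0 := by
  have hdep : ¬LinearIndepOn 𝕜 (T ∘ e) (Ico m (m + Module.finrank 𝕜 V + 1) : Set ℕ) :=
    fun h => by have := h.fintype_card_le_finrank; simp at this; omega
  obtain ⟨a, hTa, i, hi, hai⟩ := not_linearIndepOn_finset_iff.1 hdep
  refine ⟨_, by omega, a,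
    fun h => hai (linearIndepOn_finset_iff.1 (he.linearIndepOn _) a h i hi), ?_⟩
  simpa using hTa

theorem StrictMono.exists_eq_on_Ico {α : Type*} {M : ℕ → ℕ} (hM : StrictMono M)
    (A : ℕ → ℕ → α) : ∃ a : ℕ → α, ∀ j, ∀ i ∈ Ico (M j) (M (j + 1)), a i = A j i := by
  classical
  have hle : ∀ i j k, i ∈ Ico (M j) (M (j + 1)) → i ∈ Ico (M k) (M (k + 1)) → j ≤ k := by
    intro i j k hj hk
    by_contra! hkj
    have := hM.monotone (show k + 1 ≤ j from hkj)
    simp only [mem_Ico] at hj hk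
    omega
  refine ⟨fun i => if h : ∃ j, i ∈ Ico (M j) (M (j + 1)) then A h.choose i else A 0 i,
    fun j i hi => ?_⟩
  have h : ∃ j, i ∈ Ico (M j) (M (j + 1)) := ⟨j, hi⟩
  dsimp only
  rw [dif_pos h, le_antisymm (hle _ _ _ h.choose_spec hi) (hle _ _ _ hi h.choose_spec)]

theorem exists_pos_forall_sum_Ico_le {η : ℕ → ℝ} (hη : ∀ j, 0 < η j) :
    ∃ δ : ℕ → ℝ, (∀ i, 0 < δ i) ∧ ∀ j n, ∑ i ∈ Ico j n, δ i ≤ η j := by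
  let c : ℕ → ℝ := fun i => (range (i + 1)).inf' ⟨i, self_mem_range_succ i⟩ η
  have hgeom : ∀ j n, ∑ i ∈ Ico j n, (1 / 2 : ℝ) ^ (i + 1) ≤ 1 := fun j n =>
    calc ∑ i ∈ Ico j n, (1 / 2 : ℝ) ^ (i + 1)
        ≤ ∑ i ∈ range n, (1 / 2 : ℝ) ^ (i + 1) :=
          sum_le_sum_of_subset_of_nonneg (by rw [range_eq_Ico]; exact Ico_subset_Ico_left j.zero_le)
            fun _ _ _ => by positivity
      _ = (∑ i ∈ range n, (1 / 2 : ℝ) ^ i) / 2 := by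
          rw [sum_div]; exact sum_congr rfl fun i _ => by ring
      _ ≤ 1 := by linarith [sum_geometric_two_le n]
  refine ⟨fun i => c i * (1 / 2) ^ (i + 1),
    fun i => mul_pos ((lt_inf'_iff _).2 fun k _ => hη k) (by positivity), fun j n => ?_⟩
  calc ∑ i ∈ Ico j n, c i * (1 / 2) ^ (i + 1)
      ≤ ∑ i ∈ Ico j n, η j * (1 / 2) ^ (i + 1) := sum_le_sum fun i hi =>
        mul_le_mul_of_nonneg_right
          (inf'_le _ (mem_range.2 (Nat.lt_succ_of_le (mem_Ico.1 hi).1))) (by positivity)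
    _ = η j * ∑ i ∈ Ico j n, (1 / 2 : ℝ) ^ (i + 1) := by rw [mul_sum]
    _ ≤ η j := mul_le_of_le_one_right (hη j).le (hgeom j n)

theorem le_prod_Ico_mul_of_le_mul_succ {u c : ℕ → ℝ} (hc : ∀ n, 0 ≤ c n)
    (h : ∀ n, u n ≤ c n * u (n + 1)) {j n : ℕ} (hjn : j ≤ n) :
    u j ≤ (∏ i ∈ Ico j n, c i) * u n := by
  induction n, hjn using Nat.le_induction with
  | base => simp
  | succ n hjn ih =>
    calc u j ≤ (∏ i ∈ Ico j n, c i) * u n := ih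
      _ ≤ (∏ i ∈ Ico j n, c i) * (c n * u (n + 1)) :=
        mul_le_mul_of_nonneg_left (h n) (prod_nonneg fun i _ => hc i)
      _ = (∏ i ∈ Ico j (n + 1), c i) * u (n + 1) := by rw [prod_Ico_succ_top hjn]; ring

section Mazur

variable {𝕜 X : Type*} [RCLike 𝕜] [NormedAddCommGroup X] [NormedSpace 𝕜 X]

theorem Submodule.exists_finset_dual_norm_le_of_forall_eq_zero (F : Submodule 𝕜 X)
    [FiniteDimensional 𝕜 F] {δ : ℝ} (hδ : 0 < δ) :
    ∃ Φ : Finset (StrongDual 𝕜 X), ∀ f ∈ F, ∀ y : X, (∀ φ ∈ Φ, φ y = 0) →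
      ‖f‖ ≤ (1 + δ) * ‖f + y‖ := by
  classical
  choose Ψ hΨnorm hΨ using fun x : X => exists_dual_vector'' 𝕜 x
  set r := δ / (1 + δ)
  have hr : 0 < r := by positivity
  have hδr : (1 + δ) * (1 - r) = 1 := by simp only [r]; field_simp; ring
  let S : Set X := Subtype.val '' Metric.sphere (0 : F) 1
  obtain ⟨t, htS, hcover⟩ := ((isCompact_sphere (0 : F) 1).image continuous_subtype_val
    ).elim_nhds_subcover (fun x => Metric.ball x r) fun x _ => Metric.ball_mem_nhds x hr
  refine ⟨t.image Ψ, ?_⟩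
  have hunit : ∀ u ∈ S, ∀ y : X, (∀ φ ∈ t.image Ψ, φ y = 0) → 1 - r ≤ ‖u + y‖ := by
    intro u hu y hy
    obtain ⟨u₀, hu₀t, huu₀⟩ := Set.mem_iUnion₂.1 (hcover hu)
    have hu₀ : ‖u₀‖ = 1 := by
      obtain ⟨v, hv, hvu₀⟩ := htS u₀ hu₀t
      simpa [← hvu₀] using hv
    have hφ : ∀ z, ‖Ψ u₀ z‖ ≤ ‖z‖ := fun z =>
      ((Ψ u₀).le_opNorm z).trans (mul_le_of_le_one_left (norm_nonneg z) (hΨnorm u₀))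
    calc 1 - r ≤ ‖Ψ u₀ u₀‖ - ‖Ψ u₀ (u₀ - u)‖ := by
          have := hφ (u₀ - u)
          rw [hΨ, hu₀, RCLike.ofReal_one, norm_one]
          linarith [dist_eq_norm u u₀ ▸ Metric.mem_ball.1 huu₀, norm_sub_rev u₀ u]
      _ ≤ ‖Ψ u₀ u‖ := by
          rw [map_sub]; simpa using norm_sub_norm_le (Ψ u₀ u₀) (Ψ u₀ u₀ - Ψ u₀ u)
      _ = ‖Ψ u₀ (u + y)‖ := by rw [map_add, hy _ (mem_image_of_mem Ψ hu₀t), add_zero]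
      _ ≤ ‖u + y‖ := hφ _
  intro f hf y hy
  rcases eq_or_ne f 0 with rfl | hf0
  · simpa using mul_nonneg (by positivity : (0 : ℝ) ≤ 1 + δ) (norm_nonneg y)
  set c : 𝕜 := (‖f‖⁻¹ : 𝕜)
  have hfS : c • f ∈ S := ⟨⟨c • f, F.smul_mem c hf⟩, by simpa using norm_smul_inv_norm hf0, rfl⟩
  have hlow := hunit _ hfS (c • y) fun φ hφ => by rw [map_smul, hy φ hφ, smul_zero]
  rw [← smul_add, norm_smul, norm_inv, RCLike.norm_ofReal, abs_norm] at hlow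
  have hf' : 0 < ‖f‖ := norm_pos_iff.2 hf0
  calc ‖f‖ = (1 + δ) * ((1 - r) * ‖f‖) := by rw [← mul_assoc, hδr, one_mul]
    _ ≤ (1 + δ) * ‖f + y‖ := by
        gcongr
        rwa [le_inv_mul_iff₀ hf', mul_comm] at hlow

theorem LinearIndependent.exists_normalized_block_norm_le {e : ℕ → X}
    (he : LinearIndependent 𝕜 e) (F : Submodule 𝕜 X) [FiniteDimensional 𝕜 F] {δ : ℝ}
    (hδ : 0 < δ) (m : ℕ) :
    ∃ m', m < m' ∧ ∃ a : ℕ → 𝕜, ‖∑ i ∈ Ico m m', a i • e i‖ = 1 ∧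
      ∀ f ∈ F, ∀ t : 𝕜, ‖f‖ ≤ (1 + δ) * ‖f + t • ∑ i ∈ Ico m m', a i • e i‖ := by
  obtain ⟨Φ, hΦ⟩ := F.exists_finset_dual_norm_le_of_forall_eq_zero hδ
  let T : X →ₗ[𝕜] (Φ → 𝕜) := LinearMap.pi fun φ => (φ.1 : X →ₗ[𝕜] 𝕜)
  obtain ⟨m', hm', a, hy, hTy⟩ := T.exists_block_ne_zero_mem_ker he m
  set y := ∑ i ∈ Ico m m', a i • e i
  have hblock : ∑ i ∈ Ico m m', ((‖y‖⁻¹ : 𝕜) * a i) • e i = (‖y‖⁻¹ : 𝕜) • y := by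
    simp only [y, smul_sum, mul_smul]
  refine ⟨m', hm', fun i => (‖y‖⁻¹ : 𝕜) * a i, hblock ▸ norm_smul_inv_norm hy,
    fun f hf t => hΦ f hf _ fun φ hφ => ?_⟩
  have : φ y = 0 := congr_fun hTy ⟨φ, hφ⟩
  rw [hblock, map_smul, map_smul, this, smul_zero, smul_zero]

theorem LinearIndependent.exists_normalized_blockSeq_norm_le {e : ℕ → X}
    (he : LinearIndependent 𝕜 e) {δ : ℕ → ℝ} (hδ : ∀ n, 0 < δ n) :
    ∃ x : ℕ → X,
      (∃ (m : ℕ → ℕ) (a : ℕ → 𝕜), StrictMono m ∧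
        ∀ j, x j = ∑ i ∈ Ico (m j) (m (j + 1)), a i • e i) ∧
      (∀ j, ‖x j‖ = 1) ∧
      ∀ (b : ℕ → 𝕜) (n : ℕ),
        ‖∑ i ∈ range n, b i • x i‖ ≤ (1 + δ n) * ‖∑ i ∈ range (n + 1), b i • x i‖ := by
  classical
  choose next hlt coeff hnorm hle using fun (s : Finset X) (n m : ℕ) =>
    he.exists_normalized_block_norm_le (span 𝕜 (s : Set X)) (hδ n) m
  let block (s : Finset X) (n m : ℕ) : X := ∑ i ∈ Ico m (next s n m), coeff s n m i • e i
  -- state after `n` steps: the next free index and the set of blocks chosen so far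
  let st : ℕ → ℕ × Finset X := fun n =>
    Nat.rec (0, ∅) (fun n p => (next p.2 n p.1, insert (block p.2 n p.1) p.2)) n
  let x : ℕ → X := fun n => block (st n).2 n (st n).1
  have hM : StrictMono fun n => (st n).1 := strictMono_nat_of_lt_succ fun n => hlt _ _ _
  have hmono : Monotone fun n => (st n).2 := monotone_nat_of_le_succ fun n => subset_insert _ _
  obtain ⟨a, ha⟩ := hM.exists_eq_on_Ico fun n => coeff (st n).2 n (st n).1
  refine ⟨x, ⟨_, a, hM, fun j => sum_congr rfl fun i hi => by rw [ha j i hi]⟩,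
    fun n => hnorm _ _ _, fun b n => ?_⟩
  rw [sum_range_succ]
  refine hle _ _ _ _ (sum_mem fun i hi => smul_mem _ _ (subset_span ?_)) (b n)
  exact hmono (mem_range.1 hi) (mem_insert_self _ _)

end Mazur

theorem stmt_12_general {X : Type*} [NormedAddCommGroup X] [NormedSpace ℝ X]
    (e : ℕ → X) (hbasic : IsBasicSeq e)
    (ε : ℕ → ℝ) (hε : ∀ j, 0 < ε j) :
    ∃ x : ℕ → X,
      -- `x` is a block basic sequence of `e`:
      (∃ (m : ℕ → ℕ) (a : ℕ → ℝ), StrictMono m ∧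
        ∀ j, x j = ∑ i ∈ Finset.Ico (m j) (m (j + 1)), a i • e i) ∧
      -- normalized:
      (∀ j, ‖x j‖ = 1) ∧
      -- the canonical projections `P_j` associated to `(x_j)` satisfy `‖P_j‖ ≤ 1 + ε_j`:
      ∀ (b : ℕ → ℝ) (j n : ℕ), j ≤ n →
        ‖∑ i ∈ Finset.range j, b i • x i‖ ≤
          (1 + ε j) * ‖∑ i ∈ Finset.range n, b i • x i‖ := by
  have h1ε : ∀ j, 1 < 1 + ε j := fun j => lt_add_of_pos_right 1 (hε j)
  obtain ⟨δ, hδ, hδε⟩ := exists_pos_forall_sum_Ico_le (η := fun j => Real.log (1 + ε j))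
    fun j => Real.log_pos (h1ε j)
  obtain ⟨x, hblock, hnorm, hstep⟩ := hbasic.linearIndependent.exists_normalized_blockSeq_norm_le hδ
  refine ⟨x, hblock, hnorm, fun b j n hjn => ?_⟩
  calc ‖∑ i ∈ range j, b i • x i‖
      ≤ (∏ i ∈ Ico j n, (1 + δ i)) * ‖∑ i ∈ range n, b i • x i‖ :=
        le_prod_Ico_mul_of_le_mul_succ (fun i => by linarith [hδ i]) (hstep b) hjn
    _ ≤ Real.exp (Real.log (1 + ε j)) * ‖∑ i ∈ range n, b i • x i‖ := by
        gcongr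
        exact (Real.prod_one_add_le_exp_sum _ fun i => (hδ i).le).trans
          (Real.exp_le_exp.2 (hδε j n))
    _ = (1 + ε j) * ‖∑ i ∈ range n, b i • x i‖ := by rw [Real.exp_log (zero_lt_one.trans (h1ε j))]

theorem stmt_12 {X : Type*} [NormedAddCommGroup X] [NormedSpace ℝ X]
    [CompleteSpace X] (hX : ¬FiniteDimensional ℝ X)
    (e : ℕ → X) (hbasic : IsBasicSeq e)
    (ε : ℕ → ℝ) (hε : ∀ j, 0 < ε j)
    (hε0 : Filter.Tendsto ε Filter.atTop (nhds 0)) :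
    ∃ x : ℕ → X,
      -- `x` is a block basic sequence of `e`:
      (∃ (m : ℕ → ℕ) (a : ℕ → ℝ), StrictMono m ∧
        ∀ j, x j = ∑ i ∈ Finset.Ico (m j) (m (j + 1)), a i • e i) ∧
      -- normalized:
      (∀ j, ‖x j‖ = 1) ∧
      -- the canonical projections `P_j` associated to `(x_j)` satisfy `‖P_j‖ ≤ 1 + ε_j`:
      ∀ (b : ℕ → ℝ) (j n : ℕ), j ≤ n →
        ‖∑ i ∈ Finset.range j, b i • x i‖ ≤
          (1 + ε j) * ‖∑ i ∈ Finset.range n, b i • x i‖ :=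
  stmt_12_general e hbasic ε hε
end

section
/- Let X be a Banach space containing a normalized basic sequence satisfying a lower q-estimate for some q < ∞. Then K^s(X) ≥ 2^{1/q}, i.e., for every ε > 0 the unit sphere of X contains a sequence (yₙ) with ‖yₙ ± y_k‖ ≥ 2^{1/q} − ε for all n ≠ k. -/
open Finset Function

theorem exists_forall_mul_lt {ι : Type*} [Nonempty ι] {f : ι → ℝ} {b η : ℝ} (hb : 0 < b)
    (hf : ∀ i, b ≤ f i) (hη : η < 1) : ∃ i, ∀ j, η * f i < f j := by
  rcases le_or_gt η 0 with hη0 | hη0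
  · obtain ⟨i⟩ := ‹Nonempty ι›
    exact ⟨i, fun j => (mul_nonpos_of_nonpos_of_nonneg hη0 (hb.trans_le (hf i)).le).trans_lt
      (hb.trans_le (hf j))⟩
  · have hinf : 0 < ⨅ i, f i := hb.trans_le (le_ciInf hf)
    obtain ⟨i, hi⟩ := exists_lt_of_ciInf_lt ((lt_div_iff₀' hη0).2 (by nlinarith) :
      ⨅ i, f i < (⨅ i, f i) / η)
    exact ⟨i, fun j => ((lt_div_iff₀' hη0).1 hi).trans_le (ciInf_le ⟨b, by
      rintro _ ⟨k, rfl⟩; exact hf k⟩ j)⟩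

theorem exists_pairwise_disjoint_subseq (F : ℕ → Finset ℕ) (hF : ∀ M, ∀ j ∈ F M, M ≤ j) (N : ℕ) :
    ∃ φ : ℕ → ℕ, (∀ n, N ≤ φ n) ∧ Pairwise (Disjoint on (F ∘ φ)) := by
  set next : ℕ → ℕ := fun m => m + (F m).sup id + 1
  have lt_next : ∀ m, ∀ j ∈ F m, j < next m := fun m j hj => by
    have : j ≤ (F m).sup id := le_sup (f := id) hj
    show j < m + _ + 1; omega
  have hmono : Monotone fun n => next^[n] N := monotone_nat_of_le_succ fun n => by
    rw [iterate_succ_apply']; exact (Nat.le_add_right _ _).trans (Nat.le_succ _)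
  refine ⟨fun n => next^[n] N, fun n => hmono n.zero_le, (pairwise_disjoint_on (F ∘ _)).2 ?_⟩
  intro n k hnk
  refine disjoint_left.2 fun j hjn hjk => ?_
  have h1 : j < next^[n + 1] N := by rw [iterate_succ_apply']; exact lt_next _ j hjn
  exact lt_irrefl j (h1.trans_le ((hmono (hnk : n + 1 ≤ k)).trans (hF _ j hjk)))

theorem norm_normalize_sub_self {V : Type*} [NormedAddCommGroup V] [NormedSpace ℝ V] {u : V}
    (hu : u ≠ 0) : ‖NormedSpace.normalize u - u‖ = |1 - ‖u‖| := by
  have hu' : 0 < ‖u‖ := norm_pos_iff.2 hu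
  calc ‖NormedSpace.normalize u - u‖ = ‖(‖u‖⁻¹ - 1) • u‖ := by
        rw [NormedSpace.normalize, sub_smul, one_smul]
    _ = |1 - ‖u‖| := by
      rw [norm_smul, Real.norm_eq_abs, ← abs_norm u, ← abs_mul, sub_mul, abs_norm,
        inv_mul_cancel₀ hu'.ne', one_mul, abs_sub_comm]

theorem norm_add_smul_le_norm_normalize_add_smul {V : Type*} [NormedAddCommGroup V]
    [NormedSpace ℝ V] {u w : V} (hu : u ≠ 0) (hw : w ≠ 0) (hu1 : ‖u‖ ≤ 1) (hw1 : ‖w‖ ≤ 1)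
    {e : ℝ} (he : |e| = 1) :
    ‖u + e • w‖ ≤
      ‖NormedSpace.normalize u + e • NormedSpace.normalize w‖ + (1 - ‖u‖) + (1 - ‖w‖) := by
  set nu := NormedSpace.normalize u
  set nw := NormedSpace.normalize w
  have hdecomp : u + e • w = (nu + e • nw) + (u - nu) + e • (w - nw) := by
    rw [smul_sub]; abel
  calc ‖u + e • w‖ ≤ ‖nu + e • nw‖ + ‖u - nu‖ + ‖e • (w - nw)‖ := by
        rw [hdecomp]; exact norm_add₃_le
    _ = ‖nu + e • nw‖ + (1 - ‖u‖) + (1 - ‖w‖) := by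
        rw [norm_smul, Real.norm_eq_abs, he, one_mul, norm_sub_rev u, norm_sub_rev w,
          norm_normalize_sub_self hu, norm_normalize_sub_self hw,
          abs_of_nonneg (sub_nonneg.2 hu1), abs_of_nonneg (sub_nonneg.2 hw1)]

section

variable {X : Type*} [NormedAddCommGroup X] [NormedSpace ℝ X]

def HasLowerEstimate (x : ℕ → X) (q c : ℝ) : Prop :=
  ∀ (a : ℕ → ℝ) (N : ℕ), c * (∑ n ∈ range N, |a n| ^ q) ^ (1 / q) ≤ ‖∑ n ∈ range N, a n • x n‖

def tailMasses (x : ℕ → X) (q : ℝ) (M : ℕ) : Set ℝ :=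
  {t | ∃ (s : Finset ℕ) (a : ℕ → ℝ), (∀ j ∈ s, M ≤ j) ∧ ‖∑ j ∈ s, a j • x j‖ ≤ 1 ∧
    t = ∑ j ∈ s, |a j| ^ q}

noncomputable def tailConst (x : ℕ → X) (q : ℝ) (M : ℕ) : ℝ :=
  sSup (tailMasses x q M)

theorem zero_mem_tailMasses (x : ℕ → X) (q : ℝ) (M : ℕ) : 0 ∈ tailMasses x q M :=
  ⟨∅, 0, by simp, by simp, by simp⟩

namespace HasLowerEstimate

variable {x : ℕ → X} {q c : ℝ}

theorem sum_rpow_le (hlow : HasLowerEstimate x q c) (hq : 0 < q) (hc : 0 < c)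
    (s : Finset ℕ) (a : ℕ → ℝ) :
    ∑ j ∈ s, |a j| ^ q ≤ (‖∑ j ∈ s, a j • x j‖ / c) ^ q := by
  classical
  obtain ⟨N, hsN⟩ := s.exists_nat_subset_range
  have hvec : ∑ n ∈ range N, (if n ∈ s then a n else 0) • x n = ∑ j ∈ s, a j • x j := by
    simp only [ite_smul, zero_smul, sum_ite_mem, inter_eq_right.2 hsN]
  have hmass : ∑ n ∈ range N, |if n ∈ s then a n else 0| ^ q = ∑ j ∈ s, |a j| ^ q := by
    simp only [apply_ite (fun t : ℝ => |t| ^ q), abs_zero, Real.zero_rpow hq.ne', sum_ite_mem,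
      inter_eq_right.2 hsN]
  have h := hlow (fun n => if n ∈ s then a n else 0) N
  rwa [hvec, hmass, ← le_div_iff₀' hc, one_div,
    Real.rpow_inv_le_iff_of_pos (sum_nonneg fun _ _ => by positivity) (by positivity) hq] at h

theorem bddAbove_tailMasses (hlow : HasLowerEstimate x q c) (hq : 0 < q) (hc : 0 < c) (M : ℕ) :
    BddAbove (tailMasses x q M) := by
  refine ⟨(1 / c) ^ q, ?_⟩
  rintro _ ⟨s, a, -, hv, rfl⟩
  exact (hlow.sum_rpow_le hq hc s a).trans
    (Real.rpow_le_rpow (by positivity) (div_le_div_of_nonneg_right hv hc.le) hq.le)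

theorem one_le_tailConst (hlow : HasLowerEstimate x q c) (hq : 0 < q) (hc : 0 < c) {M : ℕ}
    (hM : ‖x M‖ = 1) : 1 ≤ tailConst x q M :=
  le_csSup (hlow.bddAbove_tailMasses hq hc M) ⟨{M}, fun _ => 1, by simp, by simp [hM], by simp⟩

theorem sum_rpow_le_norm_rpow_mul_tailConst (hlow : HasLowerEstimate x q c) (hq : 0 < q)
    (hc : 0 < c) {M : ℕ} {s : Finset ℕ} (hs : ∀ j ∈ s, M ≤ j) (a : ℕ → ℝ) :
    ∑ j ∈ s, |a j| ^ q ≤ ‖∑ j ∈ s, a j • x j‖ ^ q * tailConst x q M := by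
  set v := ∑ j ∈ s, a j • x j
  have hbdd := hlow.bddAbove_tailMasses hq hc M
  rcases (norm_nonneg v).eq_or_lt with hv | hv
  · have h := hlow.sum_rpow_le hq hc s a
    rw [← hv, zero_div, Real.zero_rpow hq.ne'] at h
    rwa [← hv, Real.zero_rpow hq.ne', zero_mul]
  · have hmem : (∑ j ∈ s, |a j| ^ q) / ‖v‖ ^ q ∈ tailMasses x q M := by
      refine ⟨s, fun j => a j / ‖v‖, hs, ?_, ?_⟩
      · simp_rw [div_eq_inv_mul, mul_smul, ← smul_sum]
        rw [norm_smul, norm_inv, norm_norm, inv_mul_cancel₀ hv.ne']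
      · simp_rw [sum_div, abs_div, abs_norm, Real.div_rpow (abs_nonneg _) (norm_nonneg v)]
    rw [← div_le_iff₀' (by positivity)]
    exact le_csSup hbdd hmem

theorem exists_lt_sum_rpow {M : ℕ} {t : ℝ} (ht : t < tailConst x q M) :
    ∃ (s : Finset ℕ) (a : ℕ → ℝ), (∀ j ∈ s, M ≤ j) ∧ ‖∑ j ∈ s, a j • x j‖ ≤ 1 ∧
      t < ∑ j ∈ s, |a j| ^ q := by
  obtain ⟨_, ⟨s, a, hs, hv, rfl⟩, hlt⟩ :=
    exists_lt_of_lt_csSup ⟨0, zero_mem_tailMasses x q M⟩ ht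
  exact ⟨s, a, hs, hv, hlt⟩

theorem sum_rpow_add_sum_rpow_le (hlow : HasLowerEstimate x q c) (hq : 0 < q) (hc : 0 < c)
    {M : ℕ} {s t : Finset ℕ} (hs : ∀ j ∈ s, M ≤ j) (ht : ∀ j ∈ t, M ≤ j) (hst : Disjoint s t)
    (a b : ℕ → ℝ) {e : ℝ} (he : |e| = 1) :
    ∑ j ∈ s, |a j| ^ q + ∑ j ∈ t, |b j| ^ q ≤
      ‖∑ j ∈ s, a j • x j + e • ∑ j ∈ t, b j • x j‖ ^ q * tailConst x q M := by
  classical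
  set d := s.piecewise a fun j => e * b j
  have hd_left : ∀ j ∈ s, d j = a j := fun j hj => piecewise_eq_of_mem _ _ _ hj
  have hd_right : ∀ j ∈ t, d j = e * b j := fun j hj =>
    piecewise_eq_of_notMem _ _ _ (disjoint_right.1 hst hj)
  have hvec : ∑ j ∈ s ∪ t, d j • x j = ∑ j ∈ s, a j • x j + e • ∑ j ∈ t, b j • x j := by
    rw [sum_union hst, smul_sum]
    congr 1 <;> refine sum_congr rfl fun j hj => ?_
    · rw [hd_left j hj]
    · rw [hd_right j hj, mul_smul]
  have hmass : ∑ j ∈ s ∪ t, |d j| ^ q = ∑ j ∈ s, |a j| ^ q + ∑ j ∈ t, |b j| ^ q := by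
    rw [sum_union hst]
    congr 1 <;> refine sum_congr rfl fun j hj => ?_
    · rw [hd_left j hj]
    · rw [hd_right j hj, abs_mul, he, one_mul]
  rw [← hvec, ← hmass]
  exact hlow.sum_rpow_le_norm_rpow_mul_tailConst hq hc
    (fun j hj => (mem_union.1 hj).elim (hs j) (ht j)) d

theorem exists_separated_seq (hlow : HasLowerEstimate x q c) (hq : 0 < q) (hc : 0 < c)
    (hnorm : ∀ n, ‖x n‖ = 1) {r : ℝ} (hr0 : 0 ≤ r) (hr1 : r < 1) :
    ∃ u : ℕ → X, (∀ n, r < ‖u n‖ ∧ ‖u n‖ ≤ 1) ∧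
      ∀ n k, n ≠ k → ∀ e : ℝ, |e| = 1 → 2 ^ (1 / q) * r < ‖u n + e • u k‖ := by
  obtain ⟨N, hN⟩ := exists_forall_mul_lt one_pos
    (fun M => hlow.one_le_tailConst hq hc (hnorm M)) (Real.rpow_lt_one hr0 hr1 hq)
  choose s a hs hv hmass using fun M => exists_lt_sum_rpow (hN M)
  obtain ⟨φ, hφN, hdisj⟩ := exists_pairwise_disjoint_subseq s hs N
  have htail : ∀ n, ∀ j ∈ s (φ n), N ≤ j := fun n j hj => (hφN n).trans (hs _ j hj)
  have hT : 0 < tailConst x q N := one_pos.trans_le (hlow.one_le_tailConst hq hc (hnorm N))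
  refine ⟨fun n => ∑ j ∈ s (φ n), a (φ n) j • x j, fun n => ⟨?_, hv _⟩,
    fun n k hnk e he => ?_⟩
  · have h := (hmass (φ n)).trans_le
      (hlow.sum_rpow_le_norm_rpow_mul_tailConst hq hc (htail n) _)
    exact (Real.rpow_lt_rpow_iff hr0 (norm_nonneg _) hq).1 (lt_of_mul_lt_mul_right h hT.le)
  · have h := (add_lt_add (hmass (φ n)) (hmass (φ k))).trans_le
      (hlow.sum_rpow_add_sum_rpow_le hq hc (htail n) (htail k) (hdisj hnk) _ _ he)
    rw [← two_mul, ← mul_assoc] at h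
    rw [← Real.rpow_lt_rpow_iff (by positivity) (norm_nonneg _) hq,
      Real.mul_rpow (by positivity) hr0, ← Real.rpow_mul zero_le_two, one_div_mul_cancel hq.ne',
      Real.rpow_one]
    exact lt_of_mul_lt_mul_right h hT.le

end HasLowerEstimate

end

theorem stmt_14_general {X : Type*} [NormedAddCommGroup X] [NormedSpace ℝ X]
    (q : ℝ) (hq : 1 ≤ q)
    (x : ℕ → X) (hnorm : ∀ n, ‖x n‖ = 1)
    (hlow : ∃ c : ℝ, 0 < c ∧ ∀ (a : ℕ → ℝ) (N : ℕ),
      c * (∑ n ∈ Finset.range N, |a n| ^ q) ^ (1 / q) ≤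
        ‖∑ n ∈ Finset.range N, a n • x n‖) :
    ∀ ε : ℝ, 0 < ε → ∃ y : ℕ → X, (∀ n, ‖y n‖ = 1) ∧
      ∀ n k : ℕ, n ≠ k →
        (2 : ℝ) ^ (1 / q) - ε ≤ ‖y n - y k‖ ∧
        (2 : ℝ) ^ (1 / q) - ε ≤ ‖y n + y k‖ := by
  intro ε hε
  obtain ⟨c, hc, hlow⟩ := hlow
  have hq0 : 0 < q := one_pos.trans_le hq
  set C := (2 : ℝ) ^ (1 / q)
  obtain ⟨r, hr, hr1⟩ : ∃ r, max 0 (1 - ε / (C + 2)) < r ∧ r < 1 :=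
    exists_between (max_lt one_pos (sub_lt_self 1 (by positivity)))
  have hr0 : 0 < r := (le_max_left _ _).trans_lt hr
  have hrε : (C + 2) * (1 - r) ≤ ε :=
    ((lt_div_iff₀' (by positivity)).1 (by linarith [(le_max_right _ _).trans_lt hr])).le
  obtain ⟨u, hu, hsep⟩ := HasLowerEstimate.exists_separated_seq hlow hq0 hc hnorm hr0.le hr1
  have hu0 : ∀ n, u n ≠ 0 := fun n => norm_pos_iff.1 (hr0.trans (hu n).1)
  have hsep_normalized : ∀ n k, n ≠ k → ∀ e : ℝ, |e| = 1 →
      C - ε ≤ ‖NormedSpace.normalize (u n) + e • NormedSpace.normalize (u k)‖ := by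
    intro n k hnk e he
    linarith [norm_add_smul_le_norm_normalize_add_smul (hu0 n) (hu0 k) (hu n).2 (hu k).2 he,
      hsep n k hnk e he, (hu n).1, (hu k).1]
  refine ⟨fun n => NormedSpace.normalize (u n),
    fun n => NormedSpace.norm_normalize_eq_one_iff.2 (hu0 n), fun n k hnk => ⟨?_, ?_⟩⟩
  · simpa [sub_eq_add_neg] using hsep_normalized n k hnk (-1) (by simp)
  · simpa using hsep_normalized n k hnk 1 (by simp)

theorem stmt_14 {X : Type*} [NormedAddCommGroup X] [NormedSpace ℝ X]
    [CompleteSpace X] (q : ℝ) (hq : 1 ≤ q)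
    (x : ℕ → X) (hbasic : IsBasicSeq x) (hnorm : ∀ n, ‖x n‖ = 1)
    (hlow : ∃ c : ℝ, 0 < c ∧ ∀ (a : ℕ → ℝ) (N : ℕ),
      c * (∑ n ∈ Finset.range N, |a n| ^ q) ^ (1 / q) ≤
        ‖∑ n ∈ Finset.range N, a n • x n‖) :
    ∀ ε : ℝ, 0 < ε → ∃ y : ℕ → X, (∀ n, ‖y n‖ = 1) ∧
      ∀ n k : ℕ, n ≠ k →
        (2 : ℝ) ^ (1 / q) - ε ≤ ‖y n - y k‖ ∧
        (2 : ℝ) ^ (1 / q) - ε ≤ ‖y n + y k‖ :=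
  stmt_14_general q hq x hnorm hlow
end

section
/- Let X be an infinite-dimensional Banach space containing an Auerbach system {xᵢ, fᵢ}_{i∈ℕ}. Define ν(x) = sup_{i≠k}(|fᵢ(x)| + |f_k(x)|) and |||x||| = max{‖x‖, ν(x)}. Then ||| · ||| is an equivalent norm on X satisfying ‖x‖ ≤ |||x||| ≤ 2‖x‖, each xᵢ has |||xᵢ||| = 1, and |||xᵢ ± xⱼ||| ≥ 2 for i ≠ j; hence the unit sphere of (X, |||·|||) contains a symmetrically 2-separated sequence. -/
theorem stmt_16 {X : Type*} [NormedAddCommGroup X] [NormedSpace ℝ X]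
    [CompleteSpace X] (hX : ¬FiniteDimensional ℝ X)
    (x : ℕ → X) (f : ℕ → X →L[ℝ] ℝ)
    (hx : ∀ i, ‖x i‖ = 1) (hf : ∀ i, ‖f i‖ = 1)
    (hbi : ∀ i j : ℕ, f i (x j) = if i = j then 1 else 0)
    (ν : X → ℝ)
    (hν : ∀ v, ν v = ⨆ p : {p : ℕ × ℕ // p.1 ≠ p.2}, (|f p.1.1 v| + |f p.1.2 v|))
    (N : X → ℝ) (hN : ∀ v, N v = max ‖v‖ (ν v)) :
    -- `N` is a norm:
    (∀ a b : X, N (a + b) ≤ N a + N b) ∧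
    (∀ (c : ℝ) (v : X), N (c • v) = |c| * N v) ∧
    -- equivalent to the original norm:
    (∀ v : X, ‖v‖ ≤ N v ∧ N v ≤ 2 * ‖v‖) ∧
    -- `(x i)` is a symmetrically 2-separated sequence in the new unit sphere:
    (∀ i, N (x i) = 1) ∧
    (∀ i j : ℕ, i ≠ j → 2 ≤ N (x i - x j) ∧ 2 ≤ N (x i + x j)) := by
  have key : ∀ (i : ℕ) (v : X), |f i v| ≤ ‖v‖ := by
    intro i v
    have h := (f i).le_opNorm v
    rw [hf i, one_mul] at h
    simpa using h
  have hne : Nonempty {p : ℕ × ℕ // p.1 ≠ p.2} := ⟨⟨(0, 1), by simp⟩⟩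
  have hbdd : ∀ v : X, BddAbove (Set.range fun p : {p : ℕ × ℕ // p.1 ≠ p.2} =>
      |f p.1.1 v| + |f p.1.2 v|) := by
    intro v
    refine ⟨2 * ‖v‖, ?_⟩
    rintro r ⟨p, rfl⟩
    dsimp only
    linarith [key p.1.1 v, key p.1.2 v]
  have hνle : ∀ v : X, ν v ≤ 2 * ‖v‖ := by
    intro v
    rw [hν]
    exact ciSup_le fun p => by linarith [key p.1.1 v, key p.1.2 v]
  have hνtri : ∀ a b : X, ν (a + b) ≤ ν a + ν b := by
    intro a b
    rw [hν (a + b)]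
    refine ciSup_le fun p => ?_
    have h1 : |f p.1.1 (a + b)| ≤ |f p.1.1 a| + |f p.1.1 b| := by
      rw [map_add]; exact abs_add_le _ _
    have h2 : |f p.1.2 (a + b)| ≤ |f p.1.2 a| + |f p.1.2 b| := by
      rw [map_add]; exact abs_add_le _ _
    have ha : |f p.1.1 a| + |f p.1.2 a| ≤ ν a := by
      rw [hν a]; exact le_ciSup (hbdd a) p
    have hb : |f p.1.1 b| + |f p.1.2 b| ≤ ν b := by
      rw [hν b]; exact le_ciSup (hbdd b) p
    linarith
  have hνsmul : ∀ (c : ℝ) (v : X), ν (c • v) = |c| * ν v := by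
    intro c v
    rw [hν (c • v), hν v, Real.mul_iSup_of_nonneg (abs_nonneg c)]
    congr 1
    funext p
    simp [abs_mul, mul_add]
  have hνge : ∀ (i j : ℕ) (v : X), i ≠ j → |f i v| + |f j v| ≤ ν v := by
    intro i j v hij
    rw [hν v]
    exact le_ciSup (hbdd v) ⟨(i, j), hij⟩
  refine ⟨?_, ?_, ?_, ?_, ?_⟩
  · intro a b
    rw [hN (a + b), hN a, hN b]
    refine max_le ?_ ?_
    · exact le_trans (norm_add_le a b) (add_le_add (le_max_left _ _) (le_max_left _ _))
    · exact le_trans (hνtri a b) (add_le_add (le_max_right _ _) (le_max_right _ _))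
  · intro c v
    rw [hN (c • v), hN v, norm_smul, hνsmul, Real.norm_eq_abs,
      mul_max_of_nonneg _ _ (abs_nonneg c)]
  · intro v
    rw [hN v]
    exact ⟨le_max_left _ _, max_le (by linarith [norm_nonneg v]) (hνle v)⟩
  · intro i
    have hνxi : ν (x i) = 1 := by
      apply le_antisymm
      · rw [hν (x i)]
        refine ciSup_le fun p => ?_
        rw [hbi p.1.1 i, hbi p.1.2 i]
        rcases eq_or_ne p.1.1 i with h1 | h1 <;> rcases eq_or_ne p.1.2 i with h2 | h2
        · exact absurd (h1.trans h2.symm) p.2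
        all_goals simp [h1, h2]
      · have := hνge i (i + 1) (x i) (by omega)
        rw [hbi i i, hbi (i + 1) i] at this
        simpa using this
    rw [hN (x i), hx i, hνxi, max_self]
  · intro i j hij
    constructor
    · have := hνge i j (x i - x j) hij
      rw [map_sub, map_sub, hbi i i, hbi i j, hbi j i, hbi j j] at this
      simp only [if_pos rfl, if_neg hij, if_neg (Ne.symm hij)] at this
      rw [hN (x i - x j)]
      refine le_trans ?_ (le_max_right _ _)
      rw [sub_zero, zero_sub] at this
      simp at this
      linarith
    · have := hνge i j (x i + x j) hij
      rw [map_add, map_add, hbi i i, hbi i j, hbi j i, hbi j j] at this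
      simp only [if_pos rfl, if_neg hij, if_neg (Ne.symm hij)] at this
      rw [hN (x i + x j)]
      refine le_trans ?_ (le_max_right _ _)
      rw [add_zero, zero_add] at this
      simp at this
      linarith
end

section
/- Suppose for every η > 0 a Banach space X contains a bounded sequence (xₙ) such that for every k ∈ ℕ, all signs ε₁,…,ε_k = ±1 and all indices n₁ < ⋯ < n_k one has (1 − η)k ≤ ‖Σᵢ εᵢ x_{nᵢ}‖ ≤ (1 + η)k. Then K^s(X) = 2: for every δ > 0 there is a sequence of vectors in the unit ball of X with ‖xₙ ± x_k‖ ≥ 2 − δ for all n ≠ k, and consequently a sequence of unit vectors with the same separation property. -/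
/-!
Apply the hypothesis with a small `η`. Taking `k = 1` shows that every `‖xₙ‖` lies within `η` of
`1`, and taking `k = 2` with the indices `n < k` shows `‖xₙ ± x_k‖ ≥ 2(1 - η)`. Normalising each
`xₙ` moves it by `|1 - ‖xₙ‖| ≤ η`, so the unit vectors `xₙ / ‖xₙ‖` satisfy
`‖xₙ/‖xₙ‖ ± x_k/‖x_k‖‖ ≥ 2 - 4η`.
-/

section Normalize

variable {E : Type*} [NormedAddCommGroup E] [NormedSpace ℝ E]

lemma norm_inv_norm_smul_sub_self {u : E} (hu : u ≠ 0) : ‖‖u‖⁻¹ • u - u‖ = |1 - ‖u‖| := by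
  have hu' : ‖u‖ ≠ 0 := norm_ne_zero_iff.mpr hu
  calc ‖‖u‖⁻¹ • u - u‖ = |‖u‖⁻¹ - 1| * ‖u‖ := by
        rw [show ‖u‖⁻¹ • u - u = (‖u‖⁻¹ - 1) • u by rw [sub_smul, one_smul], norm_smul,
          Real.norm_eq_abs]
    _ = |(‖u‖⁻¹ - 1) * ‖u‖| := by rw [abs_mul, abs_norm]
    _ = |1 - ‖u‖| := by rw [sub_mul, inv_mul_cancel₀ hu', one_mul]

lemma norm_add_le_norm_normalize_add {u v : E} (hu : u ≠ 0) (hv : v ≠ 0) :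
    ‖u + v‖ ≤ ‖‖u‖⁻¹ • u + ‖v‖⁻¹ • v‖ + |1 - ‖u‖| + |1 - ‖v‖| := by
  calc ‖u + v‖ = ‖(‖u‖⁻¹ • u + ‖v‖⁻¹ • v) - (‖u‖⁻¹ • u - u) - (‖v‖⁻¹ • v - v)‖ := by
        congr 1; abel
    _ ≤ ‖‖u‖⁻¹ • u + ‖v‖⁻¹ • v‖ + ‖‖u‖⁻¹ • u - u‖ + ‖‖v‖⁻¹ • v - v‖ :=
        (norm_sub_le _ _).trans (by gcongr; exact norm_sub_le _ _)
    _ = _ := by rw [norm_inv_norm_smul_sub_self hu, norm_inv_norm_smul_sub_self hv]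

lemma norm_sub_le_norm_normalize_sub {u v : E} (hu : u ≠ 0) (hv : v ≠ 0) :
    ‖u - v‖ ≤ ‖‖u‖⁻¹ • u - ‖v‖⁻¹ • v‖ + |1 - ‖u‖| + |1 - ‖v‖| := by
  simpa only [sub_eq_add_neg, norm_neg, smul_neg] using
    norm_add_le_norm_normalize_add hu (neg_ne_zero.mpr hv)

end Normalize

/-- Beauzamy's condition for an `ℓ¹` spreading model, with tolerance `η`. -/
def IsSignedL1Spreading {X : Type*} [NormedAddCommGroup X] [NormedSpace ℝ X]
    (η : ℝ) (x : ℕ → X) : Prop :=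
  ∀ (k : ℕ) (εs : ℕ → ℝ) (ns : ℕ → ℕ), StrictMono ns →
    (∀ i, εs i = 1 ∨ εs i = -1) →
    (1 - η) * k ≤ ‖∑ i ∈ Finset.range k, εs i • x (ns i)‖ ∧
    ‖∑ i ∈ Finset.range k, εs i • x (ns i)‖ ≤ (1 + η) * k

namespace IsSignedL1Spreading

variable {X : Type*} [NormedAddCommGroup X] [NormedSpace ℝ X] {η : ℝ} {x : ℕ → X}

lemma abs_one_sub_norm_le (hx : IsSignedL1Spreading η x) (n : ℕ) : |1 - ‖x n‖| ≤ η := by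
  have hmono : StrictMono (fun i => n + i) := fun _ _ h => by simpa using h
  have := hx 1 (fun _ => 1) (fun i => n + i) hmono (fun _ => Or.inl rfl)
  simp only [Finset.sum_range_one, one_smul, add_zero, Nat.cast_one, mul_one] at this
  rw [abs_le]
  constructor <;> linarith [this.1, this.2]

lemma norm_ne_zero (hx : IsSignedL1Spreading η x) (hη : η < 1) (n : ℕ) : x n ≠ 0 := by
  intro h0
  have := hx.abs_one_sub_norm_le n
  rw [h0, norm_zero, sub_zero, abs_one] at this
  linarith

lemma two_mul_one_sub_le_norm_add_smul (hx : IsSignedL1Spreading η x) {n k : ℕ} (hnk : n < k)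
    {s : ℝ} (hs : s = 1 ∨ s = -1) : 2 * (1 - η) ≤ ‖x n + s • x k‖ := by
  have hmono : StrictMono (fun i => n + i * (k - n)) :=
    strictMono_nat_of_lt_succ fun i => by rw [add_mul, one_mul]; omega
  have := (hx 2 (fun i => if i = 0 then 1 else s) (fun i => n + i * (k - n)) hmono
    fun i => by split_ifs <;> simp [hs]).1
  simp only [Finset.sum_range_succ, Finset.sum_range_zero, zero_add, if_pos, one_ne_zero,
    if_false, one_smul, zero_mul, add_zero, one_mul, Nat.cast_ofNat] at this
  rwa [show n + (k - n) = k by omega, mul_comm] at this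

lemma two_mul_one_sub_le_norm_add (hx : IsSignedL1Spreading η x) {n k : ℕ} (hnk : n ≠ k) :
    2 * (1 - η) ≤ ‖x n + x k‖ := by
  rcases hnk.lt_or_gt with hlt | hgt
  · simpa using hx.two_mul_one_sub_le_norm_add_smul hlt (Or.inl rfl)
  · simpa [add_comm] using hx.two_mul_one_sub_le_norm_add_smul hgt (Or.inl rfl)

lemma two_mul_one_sub_le_norm_sub (hx : IsSignedL1Spreading η x) {n k : ℕ} (hnk : n ≠ k) :
    2 * (1 - η) ≤ ‖x n - x k‖ := by
  rcases hnk.lt_or_gt with hlt | hgt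
  · simpa [sub_eq_add_neg] using hx.two_mul_one_sub_le_norm_add_smul hlt (Or.inr rfl)
  · rw [norm_sub_rev]
    simpa [sub_eq_add_neg] using hx.two_mul_one_sub_le_norm_add_smul hgt (Or.inr rfl)

theorem exists_norm_eq_one_separated (hx : IsSignedL1Spreading η x) (hη : η < 1) :
    ∃ z : ℕ → X, (∀ n, ‖z n‖ = 1) ∧
      ∀ n k : ℕ, n ≠ k → 2 - 4 * η ≤ ‖z n - z k‖ ∧ 2 - 4 * η ≤ ‖z n + z k‖ := by
  have hne := hx.norm_ne_zero hη
  refine ⟨fun n => ‖x n‖⁻¹ • x n, fun n => norm_smul_inv_norm (hne n), fun n k hnk => ?_⟩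
  have hn := hx.abs_one_sub_norm_le n
  have hk := hx.abs_one_sub_norm_le k
  constructor
  · linarith [hx.two_mul_one_sub_le_norm_sub hnk, norm_sub_le_norm_normalize_sub (hne n) (hne k)]
  · linarith [hx.two_mul_one_sub_le_norm_add hnk, norm_add_le_norm_normalize_add (hne n) (hne k)]

end IsSignedL1Spreading

theorem stmt_19_general {X : Type*} [NormedAddCommGroup X] [NormedSpace ℝ X]
    (h : ∀ η : ℝ, 0 < η → ∃ x : ℕ → X, (∃ C : ℝ, ∀ n, ‖x n‖ ≤ C) ∧
      ∀ (k : ℕ) (εs : ℕ → ℝ) (ns : ℕ → ℕ), StrictMono ns →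
        (∀ i, εs i = 1 ∨ εs i = -1) →
        (1 - η) * k ≤ ‖∑ i ∈ Finset.range k, εs i • x (ns i)‖ ∧
        ‖∑ i ∈ Finset.range k, εs i • x (ns i)‖ ≤ (1 + η) * k) :
    ∀ δ : ℝ, 0 < δ →
      (∃ x : ℕ → X, (∀ n, ‖x n‖ ≤ 1) ∧
        ∀ n k : ℕ, n ≠ k → 2 - δ ≤ ‖x n - x k‖ ∧ 2 - δ ≤ ‖x n + x k‖) ∧
      (∃ x : ℕ → X, (∀ n, ‖x n‖ = 1) ∧
        ∀ n k : ℕ, n ≠ k → 2 - δ ≤ ‖x n - x k‖ ∧ 2 - δ ≤ ‖x n + x k‖) := by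
  intro δ hδ
  set η := min (δ / 4) (1 / 2)
  have hη_pos : 0 < η := lt_min (by positivity) (by norm_num)
  have hη_lt : η < 1 := (min_le_right _ _).trans_lt (by norm_num)
  have hηδ : 2 - δ ≤ 2 - 4 * η := by linarith [min_le_left (δ / 4) (1 / 2)]
  obtain ⟨x, -, hx⟩ := h η hη_pos
  obtain ⟨z, hz_norm, hz_sep⟩ := IsSignedL1Spreading.exists_norm_eq_one_separated hx hη_lt
  have hsep : ∀ n k : ℕ, n ≠ k → 2 - δ ≤ ‖z n - z k‖ ∧ 2 - δ ≤ ‖z n + z k‖ := fun n k hnk =>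
    ⟨hηδ.trans (hz_sep n k hnk).1, hηδ.trans (hz_sep n k hnk).2⟩
  exact ⟨⟨z, fun n => (hz_norm n).le, hsep⟩, ⟨z, hz_norm, hsep⟩⟩

theorem stmt_19 {X : Type*} [NormedAddCommGroup X] [NormedSpace ℝ X]
    [CompleteSpace X]
    (h : ∀ η : ℝ, 0 < η → ∃ x : ℕ → X, (∃ C : ℝ, ∀ n, ‖x n‖ ≤ C) ∧
      ∀ (k : ℕ) (εs : ℕ → ℝ) (ns : ℕ → ℕ), StrictMono ns →
        (∀ i, εs i = 1 ∨ εs i = -1) →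
        (1 - η) * k ≤ ‖∑ i ∈ Finset.range k, εs i • x (ns i)‖ ∧
        ‖∑ i ∈ Finset.range k, εs i • x (ns i)‖ ≤ (1 + η) * k) :
    ∀ δ : ℝ, 0 < δ →
      (∃ x : ℕ → X, (∀ n, ‖x n‖ ≤ 1) ∧
        ∀ n k : ℕ, n ≠ k → 2 - δ ≤ ‖x n - x k‖ ∧ 2 - δ ≤ ‖x n + x k‖) ∧
      (∃ x : ℕ → X, (∀ n, ‖x n‖ = 1) ∧
        ∀ n k : ℕ, n ≠ k → 2 - δ ≤ ‖x n - x k‖ ∧ 2 - δ ≤ ‖x n + x k‖) :=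
  stmt_19_general h
end
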